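/- In the HIV ODE system above, the uninfected equilibrium (T, T*, V) = (λ/μ_T, 0, 0) always exists, and it is the unique equilibrium with nonnegative coordinates if and only if γπλ ≤ μ_T μ_{T*} μ_V. -/

import Mathlib

/-!
On the equilibrium set, `V = 0` forces `T* = 0` and `T = λ/μ_T`. If `V ≠ 0`, the last two equations
give `γπT = μ_{T*}μ_V`, and substituting into the first one yields the identity
`γπλ = μ_T μ_{T*} μ_V + γ μ_{T*} μ_V V`. Hence a nonnegative equilibrium with `V > 0` exists exactly
when `γπλ > μ_T μ_{T*} μ_V`, and reading the identity backwards produces one.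
-/

namespace HIV

def IsEquilibrium (lam gam muT muTs piv muV T Ts V : ℝ) : Prop :=
  lam - gam * T * V - muT * T = 0 ∧ gam * T * V - muTs * Ts = 0 ∧ piv * Ts - muV * V = 0

variable {lam gam muT muTs piv muV T Ts V : ℝ}

theorem isEquilibrium_uninfected (hmuT : muT ≠ 0) :
    IsEquilibrium lam gam muT muTs piv muV (lam / muT) 0 0 := by
  refine ⟨?_, by ring, by ring⟩
  field_simp
  ring

theorem IsEquilibrium.eq_uninfected_of_V_eq_zero (hE : IsEquilibrium lam gam muT muTs piv muV T Ts V)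
    (hmuT : muT ≠ 0) (hpiv : piv ≠ 0) (hV : V = 0) : (T, Ts, V) = (lam / muT, 0, 0) := by
  obtain ⟨h1, -, h3⟩ := hE
  subst hV
  have hT : T = lam / muT := by
    rw [eq_div_iff hmuT]
    linarith
  have hTs : Ts = 0 := by
    simpa [hpiv] using h3
  rw [hT, hTs]

theorem IsEquilibrium.gam_mul_piv_mul_T_eq (hE : IsEquilibrium lam gam muT muTs piv muV T Ts V)
    (hV : V ≠ 0) : gam * piv * T = muTs * muV := by
  obtain ⟨-, h2, h3⟩ := hE
  have hmul : (gam * piv * T - muTs * muV) * V = 0 := by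
    linear_combination piv * h2 + muTs * h3
  linarith [(mul_eq_zero.mp hmul).resolve_right hV]

theorem IsEquilibrium.gam_mul_piv_mul_lam_eq (hE : IsEquilibrium lam gam muT muTs piv muV T Ts V)
    (hV : V ≠ 0) : gam * piv * lam = muT * muTs * muV + gam * muTs * muV * V := by
  linear_combination gam * piv * hE.1 + (gam * V + muT) * hE.gam_mul_piv_mul_T_eq hV

theorem IsEquilibrium.lt_of_V_pos (hE : IsEquilibrium lam gam muT muTs piv muV T Ts V)
    (hgam : 0 < gam) (hmuTs : 0 < muTs) (hmuV : 0 < muV) (hV : 0 < V) :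
    muT * muTs * muV < gam * piv * lam := by
  rw [hE.gam_mul_piv_mul_lam_eq hV.ne']
  have : 0 < gam * muTs * muV * V := by positivity
  linarith

theorem exists_isEquilibrium_of_lt (hgam : 0 < gam) (hmuTs : 0 < muTs) (hpiv : 0 < piv)
    (hmuV : 0 < muV) (h : muT * muTs * muV < gam * piv * lam) :
    ∃ T Ts V, 0 ≤ T ∧ 0 ≤ Ts ∧ 0 < V ∧ IsEquilibrium lam gam muT muTs piv muV T Ts V := by
  set V := (gam * piv * lam - muT * muTs * muV) / (gam * muTs * muV)
  have hV : 0 < V := div_pos (by linarith) (by positivity)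
  refine ⟨muTs * muV / (gam * piv), muV * V / piv, V, by positivity, by positivity, hV, ?_, ?_, ?_⟩
  · simp only [V]
    field_simp
    ring
  · field_simp
    ring
  · field_simp
    ring

end HIV

open HIV in
theorem stmt13_general (lam gam muT muTs piv muV : ℝ)
    (hgam : 0 < gam) (hmuT : 0 < muT) (hmuTs : 0 < muTs)
    (hpiv : 0 < piv) (hmuV : 0 < muV) :
    -- (λ/μ_T, 0, 0) is always an equilibrium
    (lam - gam * (lam / muT) * 0 - muT * (lam / muT) = 0 ∧
     gam * (lam / muT) * 0 - muTs * 0 = 0 ∧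
     piv * 0 - muV * 0 = 0) ∧
    -- uniqueness among nonnegative equilibria ↔ γπλ ≤ μ_T μ_{T*} μ_V
    ((∀ T Ts V : ℝ, 0 ≤ T → 0 ≤ Ts → 0 ≤ V →
        lam - gam * T * V - muT * T = 0 →
        gam * T * V - muTs * Ts = 0 →
        piv * Ts - muV * V = 0 →
        (T, Ts, V) = (lam / muT, 0, 0)) ↔
      gam * piv * lam ≤ muT * muTs * muV) := by
  refine ⟨isEquilibrium_uninfected hmuT.ne', fun huniq => ?_, fun hle T Ts V _ _ hV h1 h2 h3 => ?_⟩
  · by_contra! hlt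
    obtain ⟨T, Ts, V, hT, hTs, hV, h1, h2, h3⟩ := exists_isEquilibrium_of_lt hgam hmuTs hpiv hmuV hlt
    have hV0 : V = 0 := congrArg (·.2.2) (huniq T Ts V hT hTs hV.le h1 h2 h3)
    exact hV.ne' hV0
  · have hE : IsEquilibrium lam gam muT muTs piv muV T Ts V := ⟨h1, h2, h3⟩
    rcases hV.eq_or_lt with hV0 | hVpos
    · exact hE.eq_uninfected_of_V_eq_zero hmuT.ne' hpiv.ne' hV0.symm
    · exact absurd hle (hE.lt_of_V_pos hgam hmuTs hmuV hVpos).not_ge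

/-- For the HIV ODE system with positive parameters, the uninfected
equilibrium `(T, T*, V) = (λ/μ_T, 0, 0)` always exists, and it is the unique
equilibrium with nonnegative coordinates if and only if `γπλ ≤ μ_T μ_{T*} μ_V`. -/
theorem stmt13 (lam gam muT muTs piv muV : ℝ)
    (hlam : 0 < lam) (hgam : 0 < gam) (hmuT : 0 < muT) (hmuTs : 0 < muTs)
    (hpiv : 0 < piv) (hmuV : 0 < muV) :
    -- (λ/μ_T, 0, 0) is always an equilibrium
    (lam - gam * (lam / muT) * 0 - muT * (lam / muT) = 0 ∧
     gam * (lam / muT) * 0 - muTs * 0 = 0 ∧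
     piv * 0 - muV * 0 = 0) ∧
    -- uniqueness among nonnegative equilibria ↔ γπλ ≤ μ_T μ_{T*} μ_V
    ((∀ T Ts V : ℝ, 0 ≤ T → 0 ≤ Ts → 0 ≤ V →
        lam - gam * T * V - muT * T = 0 →
        gam * T * V - muTs * Ts = 0 →
        piv * Ts - muV * V = 0 →
        (T, Ts, V) = (lam / muT, 0, 0)) ↔
      gam * piv * lam ≤ muT * muTs * muV) :=
  stmt13_general lam gam muT muTs piv muV hgam hmuT hmuTs hpiv hmuV
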